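/- Under the core RCT assumptions (exchangeability, positivity, consistency) together with exposure necessity alone — without assuming no effect on exposure or no cross-infectivity — and provided all conditioning events below have positive probability and all denominators are nonzero, the contrast conditional on exposure is identified: [P(Y^1 = 1 | E^1 ≠ 0)/P(Y^0 = 1 | E^0 ≠ 0)] / [P(Y^1 = 2 | E^1 ≠ 0)/P(Y^0 = 2 | E^0 ≠ 0)] = [P(Y = 1 | A = 1)/P(Y = 1 | A = 0)] / [P(Y = 2 | A = 1)/P(Y = 2 | A = 0)]. -/

import Mathlib

/-!
Exposure necessity puts `{Y^a = y}` inside `{E^a ≠ 0}` up to a null set when `y ≠ 0`, so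
`P(Y^a = y | E^a ≠ 0) = P(Y^a = y) / P(E^a ≠ 0)`; the factor `1 / P(E^a ≠ 0)` is the same for
both variants and cancels in the ratio of ratios. Summing exchangeability over the exposure
makes `Y^a` independent of `A`, and consistency then gives `P(Y = y | A = a) = P(Y^a = y)`.
-/

open MeasureTheory

/-- `prR P B` is the probability `P(B)` as a real number. -/
noncomputable def prR {Ω : Type*} [MeasurableSpace Ω] (P : Measure Ω) (B : Set Ω) : ℝ :=
  (P B).toReal

/-- `cprR P B C` is the conditional probability `P(B | C) = P(B ∩ C) / P(C)`. -/
noncomputable def cprR {Ω : Type*} [MeasurableSpace Ω] (P : Measure Ω) (B C : Set Ω) : ℝ :=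
  (P (B ∩ C)).toReal / (P C).toReal

section TotalProbability

variable {Ω ι : Type*} [MeasurableSpace Ω] {P : Measure Ω}
  [Fintype ι] [MeasurableSpace ι] [MeasurableSingletonClass ι] {f : Ω → ι}

theorem measure_eq_sum_measure_inter_fiber (hf : Measurable f) (S : Set Ω) :
    P S = ∑ i, P (S ∩ {ω | f ω = i}) := by
  have hfib : ∀ i, MeasurableSet (f ⁻¹' {i}) := fun i => hf (measurableSet_singleton i)
  calc P S = P.restrict S (f ⁻¹' ↑(Finset.univ : Finset ι)) := by simp
    _ = ∑ i, P.restrict S (f ⁻¹' {i}) :=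
        (sum_measure_preimage_singleton _ fun i _ => hfib i).symm
    _ = ∑ i, P (S ∩ {ω | f ω = i}) := by
        refine Finset.sum_congr rfl fun i _ => ?_
        rw [Measure.restrict_apply (hfib i), Set.inter_comm]
        rfl

theorem measure_inter_eq_mul_of_forall_inter_fiber (hf : Measurable f) {S T : Set Ω}
    (h : ∀ i, P (S ∩ {ω | f ω = i} ∩ T) = P (S ∩ {ω | f ω = i}) * P T) :
    P (S ∩ T) = P S * P T := by
  rw [measure_eq_sum_measure_inter_fiber hf (S ∩ T), measure_eq_sum_measure_inter_fiber hf S,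
    Finset.sum_mul]
  refine Finset.sum_congr rfl fun i _ => ?_
  rw [Set.inter_right_comm]
  exact h i

end TotalProbability

section ConditionalProbability

variable {Ω : Type*} [MeasurableSpace Ω] {P : Measure Ω} {B C : Set Ω}

theorem cprR_eq_prR_of_measure_inter_eq_mul (h : P (B ∩ C) = P B * P C) (hC : 0 < prR P C) :
    cprR P B C = prR P B := by
  rw [cprR, h, ENNReal.toReal_mul]
  exact mul_div_cancel_right₀ _ hC.ne'

theorem cprR_eq_div_of_ae_le (h : B ≤ᵐ[P] C) : cprR P B C = prR P B / prR P C := by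
  have hBC : (B ∩ C : Set Ω) =ᵐ[P] B :=
    h.mono fun _ hω => propext ⟨And.left, fun hB => ⟨hB, hω hB⟩⟩
  rw [cprR, measure_congr hBC]
  rfl

end ConditionalProbability

theorem div_div_div_div_cancel_scales {G : Type*} [CommGroupWithZero G] (a b c d : G) {s t : G}
    (hs : s ≠ 0) (ht : t ≠ 0) : a / s / (b / t) / (c / s / (d / t)) = a / b / (c / d) := by
  have hscale : ∀ x y : G, x / s / (y / t) = x / y * (t / s) := fun x y => by
    rw [div_div_div_eq, div_mul_div_comm, mul_comm s]
  rw [hscale, hscale, mul_div_mul_right _ _ (div_ne_zero ht hs)]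

section PotentialOutcomes

variable {Ω ι κ τ : Type*} [MeasurableSpace Ω] {P : Measure Ω}

theorem cprR_exposed_eq_div_of_exposure_necessity [Zero ι] [Zero κ] {Ea : Ω → ι} {Ya : Ω → κ}
    {y : κ} (hy : y ≠ 0) (hnec : ∀ᵐ ω ∂P, Ea ω = 0 → Ya ω = 0) :
    cprR P {ω | Ya ω = y} {ω | Ea ω ≠ 0} = prR P {ω | Ya ω = y} / prR P {ω | Ea ω ≠ 0} :=
  cprR_eq_div_of_ae_le <| hnec.mono fun _ hω hYa hEa => hy (hYa ▸ hω hEa)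

theorem cprR_observed_eq_prR_potential [Fintype ι] [MeasurableSpace ι]
    [MeasurableSingletonClass ι] {A : Ω → τ} {Y Ya : Ω → κ} {Ea : Ω → ι} {a : τ} (y : κ)
    (hEa : Measurable Ea)
    (hexch : ∀ e, P ({ω | Ya ω = y} ∩ {ω | Ea ω = e} ∩ {ω | A ω = a})
      = P ({ω | Ya ω = y} ∩ {ω | Ea ω = e}) * P {ω | A ω = a})
    (hpos : 0 < prR P {ω | A ω = a}) (hcons : ∀ᵐ ω ∂P, A ω = a → Ya ω = Y ω) :
    cprR P {ω | Y ω = y} {ω | A ω = a} = prR P {ω | Ya ω = y} := by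
  have hobs : ({ω | Y ω = y} ∩ {ω | A ω = a} : Set Ω) =ᵐ[P]
      ({ω | Ya ω = y} ∩ {ω | A ω = a} : Set Ω) :=
    hcons.mono fun ω hω => propext ⟨fun ⟨hY, hA⟩ => ⟨(hω hA).trans hY, hA⟩,
      fun ⟨hYa, hA⟩ => ⟨(hω hA).symm.trans hYa, hA⟩⟩
  rw [cprR, measure_congr hobs, ← cprR]
  exact cprR_eq_prR_of_measure_inter_eq_mul
    (measure_inter_eq_mul_of_forall_inter_fiber hEa hexch) hpos

end PotentialOutcomes

theorem stmt3_general
    {Ω : Type*} [MeasurableSpace Ω] (P : Measure Ω)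
    (A : Ω → Fin 2) (E Y : Ω → Fin 3)
    (Ea Ya : Fin 2 → Ω → Fin 3)
    (hEa : ∀ a, Measurable (Ea a))
    -- exchangeability: (Y^a, E^a) ⫫ A
    (exch : ∀ (a : Fin 2) (y e : Fin 3) (t : Fin 2),
      P ({ω | Ya a ω = y} ∩ {ω | Ea a ω = e} ∩ {ω | A ω = t})
        = P ({ω | Ya a ω = y} ∩ {ω | Ea a ω = e}) * P {ω | A ω = t})
    -- positivity
    (pos : ∀ a : Fin 2, 0 < prR P {ω | A ω = a})
    -- consistency
    (cons : ∀ a : Fin 2, ∀ᵐ ω ∂P, A ω = a → Ea a ω = E ω ∧ Ya a ω = Y ω)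
    -- exposure necessity
    (expnec : ∀ a : Fin 2, ∀ᵐ ω ∂P, Ea a ω = 0 → Ya a ω = 0)
    -- all conditioning events have positive probability
    (posEne : ∀ a : Fin 2, 0 < prR P {ω | Ea a ω ≠ 0}) :
    (cprR P {ω | Ya 1 ω = 1} {ω | Ea 1 ω ≠ 0} / cprR P {ω | Ya 0 ω = 1} {ω | Ea 0 ω ≠ 0})
        / (cprR P {ω | Ya 1 ω = 2} {ω | Ea 1 ω ≠ 0} / cprR P {ω | Ya 0 ω = 2} {ω | Ea 0 ω ≠ 0})
      = (cprR P {ω | Y ω = 1} {ω | A ω = 1} / cprR P {ω | Y ω = 1} {ω | A ω = 0})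
        / (cprR P {ω | Y ω = 2} {ω | A ω = 1} / cprR P {ω | Y ω = 2} {ω | A ω = 0}) := by
  have hExposed : ∀ a (y : Fin 3), y ≠ 0 → cprR P {ω | Ya a ω = y} {ω | Ea a ω ≠ 0}
      = prR P {ω | Ya a ω = y} / prR P {ω | Ea a ω ≠ 0} :=
    fun a _ hy => cprR_exposed_eq_div_of_exposure_necessity hy (expnec a)
  have hObserved : ∀ a y, cprR P {ω | Y ω = y} {ω | A ω = a} = prR P {ω | Ya a ω = y} :=
    fun a y => cprR_observed_eq_prR_potential y (hEa a) (fun e => exch a y e a) (pos a)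
      ((cons a).mono fun _ h ha => (h ha).2)
  rw [hExposed 1 1 one_ne_zero, hExposed 0 1 one_ne_zero, hExposed 1 2 (by decide),
    hExposed 0 2 (by decide), hObserved 1 1, hObserved 0 1, hObserved 1 2, hObserved 0 2]
  exact div_div_div_div_cancel_scales _ _ _ _ (posEne 1).ne' (posEne 0).ne'

/-- identification of the contrast conditional on exposure (CCE) under
exchangeability, positivity, consistency and exposure necessity alone (without
no effect on exposure or no cross-infectivity). -/
theorem stmt3
    {Ω : Type*} [MeasurableSpace Ω] (P : Measure Ω) [IsProbabilityMeasure P]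
    (A : Ω → Fin 2) (E Y : Ω → Fin 3)
    (Ea Ya : Fin 2 → Ω → Fin 3)
    (hA : Measurable A) (hE : Measurable E) (hY : Measurable Y)
    (hEa : ∀ a, Measurable (Ea a)) (hYa : ∀ a, Measurable (Ya a))
    -- exchangeability: (Y^a, E^a) ⫫ A
    (exch : ∀ (a : Fin 2) (y e : Fin 3) (t : Fin 2),
      P ({ω | Ya a ω = y} ∩ {ω | Ea a ω = e} ∩ {ω | A ω = t})
        = P ({ω | Ya a ω = y} ∩ {ω | Ea a ω = e}) * P {ω | A ω = t})
    -- positivity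
    (pos : ∀ a : Fin 2, 0 < prR P {ω | A ω = a})
    -- consistency
    (cons : ∀ a : Fin 2, ∀ᵐ ω ∂P, A ω = a → Ea a ω = E ω ∧ Ya a ω = Y ω)
    -- exposure necessity
    (expnec : ∀ a : Fin 2, ∀ᵐ ω ∂P, Ea a ω = 0 → Ya a ω = 0)
    -- all conditioning events have positive probability
    (posEne : ∀ a : Fin 2, 0 < prR P {ω | Ea a ω ≠ 0})
    -- all denominators are nonzero
    (d1 : cprR P {ω | Ya 0 ω = 1} {ω | Ea 0 ω ≠ 0} ≠ 0)
    (d2 : cprR P {ω | Ya 0 ω = 2} {ω | Ea 0 ω ≠ 0} ≠ 0)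
    (d3 : cprR P {ω | Ya 1 ω = 2} {ω | Ea 1 ω ≠ 0} ≠ 0)
    (d4 : cprR P {ω | Y ω = 1} {ω | A ω = 0} ≠ 0)
    (d5 : cprR P {ω | Y ω = 2} {ω | A ω = 0} ≠ 0)
    (d6 : cprR P {ω | Y ω = 2} {ω | A ω = 1} ≠ 0) :
    (cprR P {ω | Ya 1 ω = 1} {ω | Ea 1 ω ≠ 0} / cprR P {ω | Ya 0 ω = 1} {ω | Ea 0 ω ≠ 0})
        / (cprR P {ω | Ya 1 ω = 2} {ω | Ea 1 ω ≠ 0} / cprR P {ω | Ya 0 ω = 2} {ω | Ea 0 ω ≠ 0})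
      = (cprR P {ω | Y ω = 1} {ω | A ω = 1} / cprR P {ω | Y ω = 1} {ω | A ω = 0})
        / (cprR P {ω | Y ω = 2} {ω | A ω = 1} / cprR P {ω | Y ω = 2} {ω | A ω = 0}) :=
  stmt3_general P A E Y Ea Ya hEa exch pos cons expnec posEne
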